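/- (Corollary 2) Let N, U be positive natural numbers. For each u ∈ Fin U let R_u : Matrix (Fin N) (Fin N) ℂ be Hermitian with a negative eigenvalue, i.e., there exist r_u < 0 and a unit vector v_u ∈ ℂ^N with R_u v_u = r_u·v_u. Let a > 0, ρ > 0 be real, c : Fin U → ℂ^N, and for P : Fin U → ℂ^N define ψ(P) = Σ_u ‖P u‖², ψ'(P) = Σ_u ‖P u − c u‖², f(P) = Σ_u Re((P u)ᴴ R_u (P u)). Suppose P★ is a global minimizer of f over K = {P : ψ(P) ≤ a ∧ ψ'(P) ≤ ρ}. Then every Q with ψ(Q) < a and ψ'(Q) < ρ satisfies f(Q) > f(P★); that is, the minimal level set {P : f(P) = f(P★)} meets K only on its boundary, so the optimal point lies on the tangent plane of the level surface f = J₀ with the constraint surface. -/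

import Mathlib

open Finset Matrix ComplexConjugate

/-!
Each `R_u` has a negative eigenvalue `r_u` with unit eigenvector `v_u`, so the real quadratic form
`f` takes the value `r_u < 0` at the point `w` that is `v_u` in slot `u` and zero elsewhere. Along
`w` the form is strictly concave at every point: `f (Q + t w) + f (Q - t w) = 2 f Q + 2 t² f w`.
Hence `f` has no local minimum at all. But an interior point `Q` of `K` with `f Q ≤ f P★` would
minimise `f` on the neighbourhood `K` of `Q`.
-/

open Filter Topology

theorem not_isLocalMin_of_add_add_sub_eq {E : Type*} [AddCommGroup E] [Module ℝ E]
    [TopologicalSpace E] [IsTopologicalAddGroup E] [ContinuousSMul ℝ E] {f : E → ℝ} {x w : E}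
    (hf : ∀ t : ℝ, f (x + t • w) + f (x - t • w) = 2 * f x + 2 * t ^ 2 * f w) (hw : f w < 0) :
    ¬ IsLocalMin f x := by
  intro hmin
  have hline : ∀ g : ℝ → E, Continuous g → g 0 = x → ∀ᶠ t in 𝓝[≠] 0, f x ≤ f (g t) :=
    fun g hg hg0 => ((hg0 ▸ hg.tendsto 0).mono_left nhdsWithin_le_nhds).eventually hmin
  obtain ⟨t, (ht : t ≠ 0), hplus, hminus⟩ := (eventually_mem_nhdsWithin.and
    ((hline (fun t => x + t • w) (by fun_prop) (by simp)).and
      (hline (fun t => x - t • w) (by fun_prop) (by simp)))).exists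
  nlinarith [hf t, mul_neg_of_pos_of_neg (pow_two_pos_of_ne_zero ht) hw]

section QuadForm

variable {n : Type*} [Fintype n]

def quadForm (A : Matrix n n ℂ) (x : n → ℂ) : ℝ := (∑ i, ∑ j, conj (x i) * A i j * x j).re

theorem quadForm_add_add_quadForm_sub (A : Matrix n n ℂ) (x y : n → ℂ) :
    quadForm A (x + y) + quadForm A (x - y) = 2 * quadForm A x + 2 * quadForm A y := by
  have h : ∑ i, ∑ j, conj ((x + y) i) * A i j * (x + y) j
      + ∑ i, ∑ j, conj ((x - y) i) * A i j * (x - y) j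
      = 2 * ∑ i, ∑ j, conj (x i) * A i j * x j + 2 * ∑ i, ∑ j, conj (y i) * A i j * y j := by
    simp only [mul_sum, ← sum_add_distrib]
    refine sum_congr rfl fun i _ => sum_congr rfl fun j _ => ?_
    simp only [Pi.add_apply, Pi.sub_apply, map_add, map_sub]
    ring
  simpa [quadForm] using congrArg Complex.re h

theorem quadForm_smul (A : Matrix n n ℂ) (t : ℝ) (x : n → ℂ) :
    quadForm A (t • x) = t ^ 2 * quadForm A x := by
  simp only [quadForm, ← Complex.re_ofReal_mul, Complex.ofReal_pow, mul_sum]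
  congr 1
  refine sum_congr rfl fun i _ => sum_congr rfl fun j _ => ?_
  simp only [Pi.smul_apply, Complex.real_smul, map_mul, Complex.conj_ofReal]
  ring

@[simp]
theorem quadForm_zero (A : Matrix n n ℂ) : quadForm A 0 = 0 := by
  simp [quadForm]

theorem quadForm_of_mulVec_eq_smul {A : Matrix n n ℂ} {v : n → ℂ} {r : ℝ}
    (hv : A *ᵥ v = (r : ℂ) • v) (hv1 : ∑ i, conj (v i) * v i = 1) : quadForm A v = r := by
  have hrow : ∀ i, ∑ j, conj (v i) * A i j * v j = r * (conj (v i) * v i) := fun i => by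
    have := congrFun hv i
    simp only [mulVec, dotProduct, Pi.smul_apply, smul_eq_mul] at this
    simp only [mul_assoc, ← mul_sum, this]
    ring
  simp [quadForm, hrow, ← mul_sum, hv1]

end QuadForm

theorem sum_quadForm_not_isLocalMin {ι n : Type*} [Fintype ι] [DecidableEq ι] [Fintype n]
    (R : ι → Matrix n n ℂ) {u : ι} {v : n → ℂ} (hv : quadForm (R u) v < 0) (P : ι → n → ℂ) :
    ¬ IsLocalMin (fun P : ι → n → ℂ => ∑ u, quadForm (R u) (P u)) P := by
  refine not_isLocalMin_of_add_add_sub_eq (w := Pi.single u v) (fun t => ?_) ?_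
  · simp only [Pi.add_apply, Pi.sub_apply, Pi.smul_apply, mul_sum, ← sum_add_distrib]
    refine sum_congr rfl fun u' _ => ?_
    rw [quadForm_add_add_quadForm_sub, quadForm_smul, mul_assoc]
  · rwa [Fintype.sum_eq_single u fun u' hu' => by simp [hu'], Pi.single_eq_same]

theorem stmt_14_general (N U : ℕ) (hU : 0 < U)
    (R : Fin U → Matrix (Fin N) (Fin N) ℂ)
    (r : Fin U → ℝ) (v : Fin U → Fin N → ℂ) (hr : ∀ u, r u < 0)
    (hv : ∀ u, R u *ᵥ v u = (r u : ℂ) • v u)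
    (hv1 : ∀ u, ∑ i, conj (v u i) * v u i = 1)
    (a ρ : ℝ) (c : Fin U → Fin N → ℂ)
    (f ψ ψ' : (Fin U → Fin N → ℂ) → ℝ)
    (hf : ∀ P, f P = ∑ u, (∑ i, ∑ j, conj (P u i) * R u i j * P u j).re)
    (hψdef : ∀ P, ψ P = ∑ u, ∑ i, ‖P u i‖ ^ 2)
    (hψ'def : ∀ P, ψ' P = ∑ u, ∑ i, ‖P u i - c u i‖ ^ 2)
    (Pstar : Fin U → Fin N → ℂ)
    (hmin : ∀ P, ψ P ≤ a → ψ' P ≤ ρ → f Pstar ≤ f P) :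
    ∀ Q, ψ Q < a → ψ' Q < ρ → f Q > f Pstar := by
  intro Q hQa hQρ
  by_contra! hQ
  obtain rfl : f = fun P => ∑ u, quadForm (R u) (P u) := funext hf
  have hψ : Continuous ψ := by rw [funext hψdef]; fun_prop
  have hψ' : Continuous ψ' := by rw [funext hψ'def]; fun_prop
  refine sum_quadForm_not_isLocalMin R (u := ⟨0, hU⟩)
    ((quadForm_of_mulVec_eq_smul (hv _) (hv1 _)).symm ▸ hr _) Q ?_
  filter_upwards [hψ.continuousAt.eventually_lt continuousAt_const hQa,
    hψ'.continuousAt.eventually_lt continuousAt_const hQρ] with P hPa hPρ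
  exact hQ.trans (hmin P hPa.le hPρ.le)

/-- Corollary 2: if `P★` is a global minimizer of `f = −J` over the constraint set
`K = {P : ψ(P) ≤ a ∧ ψ'(P) ≤ ρ}` and every `R_u` is Hermitian with a negative eigenvalue,
then every strictly interior feasible point `Q` (with `ψ(Q) < a`, `ψ'(Q) < ρ`) satisfies
`f(Q) > f(P★)`: the minimal level set meets `K` only on its boundary. -/
theorem stmt_14 (N U : ℕ) (hN : 0 < N) (hU : 0 < U)
    (R : Fin U → Matrix (Fin N) (Fin N) ℂ) (hR : ∀ u, (R u).IsHermitian)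
    (r : Fin U → ℝ) (v : Fin U → Fin N → ℂ) (hr : ∀ u, r u < 0)
    (hv : ∀ u, R u *ᵥ v u = (r u : ℂ) • v u)
    (hv1 : ∀ u, ∑ i, conj (v u i) * v u i = 1)
    (a ρ : ℝ) (ha : 0 < a) (hρ : 0 < ρ) (c : Fin U → Fin N → ℂ)
    (f ψ ψ' : (Fin U → Fin N → ℂ) → ℝ)
    (hf : ∀ P, f P = ∑ u, (∑ i, ∑ j, conj (P u i) * R u i j * P u j).re)
    (hψdef : ∀ P, ψ P = ∑ u, ∑ i, ‖P u i‖ ^ 2)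
    (hψ'def : ∀ P, ψ' P = ∑ u, ∑ i, ‖P u i - c u i‖ ^ 2)
    (Pstar : Fin U → Fin N → ℂ)
    (hfeas : ψ Pstar ≤ a ∧ ψ' Pstar ≤ ρ)
    (hmin : ∀ P, ψ P ≤ a → ψ' P ≤ ρ → f Pstar ≤ f P) :
    ∀ Q, ψ Q < a → ψ' Q < ρ → f Q > f Pstar :=
  stmt_14_general N U hU R r v hr hv hv1 a ρ c f ψ ψ' hf hψdef hψ'def Pstar hmin
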